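/- Let F be holomorphic on Δ⁺ with a continuous extension to Δ⁺ ∪ γ, suppose there exists C > 0 such that |Im F(t)| ≤ C·|Re F(t)| for every t ∈ γ, and suppose F is not identically zero on Δ⁺. Then the set {t ∈ γ : Re F(t) ≠ 0} is a relatively open, dense subset of the interval γ. -/

import Mathlib

/-- The open upper half disc `Δ⁺ = {ζ ∈ ℂ : |ζ| < 1, Im ζ > 0}`. -/
def upperHalfDisc : Set ℂ := {z : ℂ | ‖z‖ < 1 ∧ 0 < z.im}

/-- The interval `γ = (-1,1)` viewed as a subset of the real axis in `ℂ`. -/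
def realSegment : Set ℂ := {z : ℂ | z.im = 0 ∧ -1 < z.re ∧ z.re < 1}

/-!
A function holomorphic above the real axis, continuous up to a piece of it and vanishing there,
can be continued by zero below the axis: the extension is continuous, holomorphic off the axis, and
its rectangle integrals vanish (split a rectangle along the axis and apply Cauchy–Goursat to each
half, which needs continuity only up to the boundary), so it is holomorphic by Morera's theorem and
vanishes identically by the identity theorem. On `γ`, the cone condition turns
`Re F = 0` into `F = 0`, so `Re F` cannot vanish on an open subinterval unless `F ≡ 0`.
-/

open Complex Set Metric Topology
open scoped Interval

namespace Complex

variable {E : Type*} [NormedAddCommGroup E] [NormedSpace ℂ E] {f : ℂ → E}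

lemma wedgeIntegral_add_wedgeIntegral_split_im {z w : ℂ} {t : ℝ}
    (hf : ContinuousOn f (Rectangle z w)) (ht : t ∈ [[z.im, w.im]]) :
    wedgeIntegral z w f + wedgeIntegral w z f =
      (wedgeIntegral z (w.re + t * I) f + wedgeIntegral (w.re + t * I) z f) +
      (wedgeIntegral (z.re + t * I) w f + wedgeIntegral w (z.re + t * I) f) := by
  have hcol : ∀ x ∈ [[z.re, w.re]], ∀ a ∈ [[z.im, w.im]], ∀ b ∈ [[z.im, w.im]],
      IntervalIntegrable (fun y : ℝ => f (↑x + ↑y * I)) MeasureTheory.volume a b := by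
    intro x hx a ha b hb
    refine ContinuousOn.intervalIntegrable (hf.comp (by fun_prop) fun y hy => ?_)
    exact mem_reProdIm.2 ⟨by simpa using hx, by simpa using uIcc_subset_uIcc ha hb hy⟩
  simp only [wedgeIntegral_add_wedgeIntegral_eq, add_re, add_im, ofReal_re, ofReal_im, mul_re,
    mul_im, I_re, I_im, mul_zero, mul_one, sub_zero, zero_add, add_zero]
  rw [← intervalIntegral.integral_add_adjacent_intervals
      (hcol _ left_mem_uIcc _ left_mem_uIcc _ ht) (hcol _ left_mem_uIcc _ ht _ right_mem_uIcc),
    ← intervalIntegral.integral_add_adjacent_intervals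
      (hcol _ right_mem_uIcc _ left_mem_uIcc _ ht) (hcol _ right_mem_uIcc _ ht _ right_mem_uIcc)]
  simp only [smul_add]
  abel

lemma left_mem_rectangle {z w : ℂ} : z ∈ Rectangle z w :=
  mem_reProdIm.2 ⟨left_mem_uIcc, left_mem_uIcc⟩

lemma right_mem_rectangle {z w : ℂ} : w ∈ Rectangle z w :=
  mem_reProdIm.2 ⟨right_mem_uIcc, right_mem_uIcc⟩

lemma rectangle_subset_rectangle {z w z' w' : ℂ} (hz : z' ∈ Rectangle z w)
    (hw : w' ∈ Rectangle z w) : Rectangle z' w' ⊆ Rectangle z w := fun _ hp =>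
  mem_reProdIm.2 ⟨uIcc_subset_uIcc hz.1 hw.1 (mem_reProdIm.1 hp).1,
    uIcc_subset_uIcc hz.2 hw.2 (mem_reProdIm.1 hp).2⟩

variable {U : Set ℂ}

lemma wedgeIntegral_add_wedgeIntegral_eq_zero_of_notMem_Ioo {z w : ℂ}
    (hc : ContinuousOn f U) (hd : DifferentiableOn ℂ f (U \ {z | z.im = 0}))
    (hR : Rectangle z w ⊆ U) (h0 : (0 : ℝ) ∉ Ioo (min z.im w.im) (max z.im w.im)) :
    wedgeIntegral z w f + wedgeIntegral w z f = 0 := by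
  rw [wedgeIntegral_add_wedgeIntegral_eq]
  refine integral_boundary_rect_eq_zero_of_continuousOn_of_differentiableOn f z w (hc.mono hR)
    (hd.mono fun p hp => ⟨hR ?_, fun him => h0 (him ▸ (mem_reProdIm.1 hp).2)⟩)
  obtain ⟨hre, him⟩ := mem_reProdIm.1 hp
  exact mem_reProdIm.2 ⟨Ioo_subset_Icc_self hre, Ioo_subset_Icc_self him⟩

lemma isConservativeOn_of_differentiableOn_im_ne_zero
    (hc : ContinuousOn f U) (hd : DifferentiableOn ℂ f (U \ {z | z.im = 0})) :
    IsConservativeOn f U := by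
  intro z w hR
  rw [← add_eq_zero_iff_eq_neg]
  by_cases h0 : (0 : ℝ) ∈ Ioo (min z.im w.im) (max z.im w.im)
  · have h0' : (0 : ℝ) ∈ [[z.im, w.im]] := Ioo_subset_Icc_self h0
    have hw₀ : (w.re : ℂ) ∈ Rectangle z w := mem_reProdIm.2 ⟨by simp, by simpa using h0'⟩
    have hz₀ : (z.re : ℂ) ∈ Rectangle z w := mem_reProdIm.2 ⟨by simp, by simpa using h0'⟩
    rw [wedgeIntegral_add_wedgeIntegral_split_im (hc.mono hR) h0', ofReal_zero, zero_mul, add_zero,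
      add_zero,
      wedgeIntegral_add_wedgeIntegral_eq_zero_of_notMem_Ioo hc hd
        ((rectangle_subset_rectangle left_mem_rectangle hw₀).trans hR) (by simpa using le_of_lt),
      wedgeIntegral_add_wedgeIntegral_eq_zero_of_notMem_Ioo hc hd
        ((rectangle_subset_rectangle hz₀ right_mem_rectangle).trans hR) (by simpa using le_of_lt),
      add_zero]
  · exact wedgeIntegral_add_wedgeIntegral_eq_zero_of_notMem_Ioo hc hd hR h0

theorem differentiableOn_of_differentiableOn_im_ne_zero [CompleteSpace E] (hU : IsOpen U)
    (hc : ContinuousOn f U) (hd : DifferentiableOn ℂ f (U \ {z | z.im = 0})) :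
    DifferentiableOn ℂ f U :=
  (isConservativeOn_and_continuousOn_iff_isDifferentiableOn hU).1
    ⟨isConservativeOn_of_differentiableOn_im_ne_zero hc hd, hc⟩

theorem eqOn_zero_of_eqOn_zero_real_boundary [CompleteSpace E] (hU : IsOpen U)
    (hU' : IsPreconnected U) (hf : DifferentiableOn ℂ f U) {c r : ℝ} (hr : 0 < r)
    (hsub : ball (c : ℂ) r ∩ {z | 0 < z.im} ⊆ U)
    (hc : ContinuousOn f (ball (c : ℂ) r ∩ {z | 0 ≤ z.im}))
    (hzero : EqOn f 0 (ball (c : ℂ) r ∩ {z | z.im = 0})) :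
    EqOn f 0 U := by
  set g : ℂ → E := fun z => if 0 < z.im then f z else 0
  have hg_upper : ∀ z, 0 < z.im → g =ᶠ[𝓝 z] f := fun z hz => by
    filter_upwards [(isOpen_lt continuous_const continuous_im).mem_nhds hz] with p hp
    simp [g, show 0 < p.im from hp]
  have hg_lower : ∀ z, z.im < 0 → g =ᶠ[𝓝 z] 0 := fun z hz => by
    filter_upwards [(isOpen_lt continuous_im continuous_const).mem_nhds hz] with p hp
    simp [g, not_lt.2 (le_of_lt (show p.im < 0 from hp))]
  have hg_cont : ContinuousOn g (ball (c : ℂ) r) := by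
    refine ContinuousOn.if (fun z hz => ?_) ?_ continuousOn_const
    · rw [frontier_setOfPred_lt_im] at hz
      exact hzero hz
    · rwa [closure_setOfPred_lt_im]
  have hg_diff : DifferentiableOn ℂ g (ball (c : ℂ) r \ {z | z.im = 0}) := by
    rintro z ⟨hz, him⟩
    refine DifferentiableAt.differentiableWithinAt ?_
    rcases lt_or_gt_of_ne him with him | him
    · exact (differentiableAt_const 0).congr_of_eventuallyEq (hg_lower z him)
    · exact (hf.differentiableAt (hU.mem_nhds (hsub ⟨hz, him⟩))).congr_of_eventuallyEq
        (hg_upper z him)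
  have hball : ∀ s : ℝ, |s| < r → (c : ℂ) + s * I ∈ ball (c : ℂ) r := fun s hs => by
    simpa [Complex.dist_eq] using hs
  have hr2 : |r / 2| < r := by rw [abs_of_pos (half_pos hr)]; linarith
  have hg_zero : EqOn g 0 (ball (c : ℂ) r) :=
    ((differentiableOn_of_differentiableOn_im_ne_zero isOpen_ball hg_cont hg_diff).analyticOnNhd
      isOpen_ball).eqOn_zero_of_preconnected_of_eventuallyEq_zero
      (convex_ball _ _).isPreconnected (hball (-(r / 2)) (by rwa [abs_neg]))
      (hg_lower _ (by simp [hr]))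
  have him : 0 < ((c : ℂ) + (r / 2 : ℝ) * I).im := by simp [hr]
  have hf_zero : f =ᶠ[𝓝 ((c : ℂ) + (r / 2 : ℝ) * I)] 0 := by
    filter_upwards [isOpen_ball.mem_nhds (hball _ hr2), hg_upper _ him] with p hp hgp
    rw [← hgp]
    exact hg_zero hp
  exact (hf.analyticOnNhd hU).eqOn_zero_of_preconnected_of_eventuallyEq_zero hU'
    (hsub ⟨hball _ hr2, him⟩) hf_zero

end Complex

lemma isOpen_upperHalfDisc : IsOpen upperHalfDisc :=
  (isOpen_lt continuous_norm continuous_const).inter (isOpen_lt continuous_const continuous_im)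

lemma isPreconnected_upperHalfDisc : IsPreconnected upperHalfDisc := by
  have : upperHalfDisc = ball (0 : ℂ) 1 ∩ {z : ℂ | 0 < z.im} := by
    ext z
    simp [upperHalfDisc]
  rw [this]
  exact ((convex_ball 0 1).inter (convex_halfSpace_im_gt 0)).isPreconnected

lemma ofReal_mem_realSegment {t : ℝ} (ht : t ∈ Ioo (-1) 1) : (t : ℂ) ∈ realSegment :=
  ⟨ofReal_im t, by simpa using ht.1, by simpa using ht.2⟩

theorem eqOn_zero_upperHalfDisc_of_eventually_eq_zero {E : Type*} [NormedAddCommGroup E]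
    [NormedSpace ℂ E] [CompleteSpace E] {F : ℂ → E}
    (hF_hol : DifferentiableOn ℂ F upperHalfDisc)
    (hF_cont : ContinuousOn F (upperHalfDisc ∪ realSegment)) {a : ℝ} (ha : a ∈ Ioo (-1) 1)
    (hzero : ∀ᶠ t : ℝ in 𝓝 a, F t = 0) :
    EqOn F 0 upperHalfDisc := by
  obtain ⟨ε, hε, hε_zero⟩ := Metric.eventually_nhds_iff.1 hzero
  have ha' : |a| < 1 := abs_lt.2 ha
  set r := min ε (1 - |a|)
  have hre : ∀ z ∈ ball (a : ℂ) r, |z.re - a| < r := fun z hz =>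
    (abs_re_le_norm (z - a)).trans_lt (by simpa [Complex.dist_eq] using hz)
  have hupper : ball (a : ℂ) r ∩ {z | 0 < z.im} ⊆ upperHalfDisc := fun z ⟨hz, him⟩ => by
    refine ⟨?_, him⟩
    calc ‖z‖ ≤ ‖z - a‖ + ‖(a : ℂ)‖ := norm_le_norm_sub_add z a
      _ < r + |a| := by rw [norm_real, Real.norm_eq_abs]; simpa [Complex.dist_eq] using hz
      _ ≤ 1 := by linarith [min_le_right ε (1 - |a|)]
  refine Complex.eqOn_zero_of_eqOn_zero_real_boundary isOpen_upperHalfDisc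
    isPreconnected_upperHalfDisc hF_hol (lt_min hε (by linarith)) hupper
    (hF_cont.mono fun z ⟨hz, him⟩ => ?_) fun z ⟨hz, him⟩ => ?_
  · rcases (show (0 : ℝ) ≤ z.im from him).eq_or_lt with him | him
    · have := abs_lt.1 ((hre z hz).trans_le (min_le_right _ _))
      exact Or.inr ⟨him.symm, by linarith [neg_abs_le a], by linarith [le_abs_self a]⟩
    · exact Or.inl (hupper ⟨hz, him⟩)
  · have hz_eq : z = (z.re : ℂ) := Complex.ext rfl (by simpa using him)
    rw [hz_eq]
    exact hε_zero ((hre z hz).trans_le (min_le_left _ _))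

theorem re_nonzero_open_dense_in_segment_general
    (F : ℂ → ℂ)
    (hF_hol : DifferentiableOn ℂ F upperHalfDisc)
    (hF_cont : ContinuousOn F (upperHalfDisc ∪ realSegment))
    (C : ℝ)
    (hcone : ∀ t ∈ realSegment, |(F t).im| ≤ C * |(F t).re|)
    (hF_ne : ¬ (∀ z ∈ upperHalfDisc, F z = 0)) :
    IsOpen {t ∈ Set.Ioo (-1 : ℝ) 1 | (F (t : ℂ)).re ≠ 0} ∧
    Set.Ioo (-1 : ℝ) 1 ⊆ closure {t ∈ Set.Ioo (-1 : ℝ) 1 | (F (t : ℂ)).re ≠ 0} := by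
  have hre_cont : ContinuousOn (fun t : ℝ => (F t).re) (Ioo (-1) 1) :=
    continuous_re.comp_continuousOn (hF_cont.comp continuous_ofReal.continuousOn
      fun _ ht => Or.inr (ofReal_mem_realSegment ht))
  refine ⟨hre_cont.isOpen_inter_preimage isOpen_Ioo isOpen_compl_singleton, fun a ha => ?_⟩
  by_contra ha_cl
  have hzero : ∀ᶠ t : ℝ in 𝓝 a, F t = 0 := by
    filter_upwards [isClosed_closure.isOpen_compl.mem_nhds ha_cl, isOpen_Ioo.mem_nhds ha]
      with t ht_cl ht
    have hre : (F t).re = 0 := not_not.1 fun h => ht_cl (subset_closure ⟨ht, h⟩)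
    have him : (F t).im = 0 := by
      simpa [hre] using hcone t (ofReal_mem_realSegment ht)
    exact Complex.ext hre him
  exact hF_ne fun z hz => eqOn_zero_upperHalfDisc_of_eventually_eq_zero hF_hol hF_cont ha hzero hz

/-- **Observation 2.5, second part.**  If `F` is holomorphic on `Δ⁺`, continuous on
`Δ⁺ ∪ γ`, maps `γ` into a cone `{|Im z| ≤ C|Re z|}`, and is not identically zero on `Δ⁺`,
then `{t ∈ (-1,1) : Re F(t) ≠ 0}` is a relatively open dense subset of the interval
`(-1,1)` (since `(-1,1)` is open in `ℝ`, relative openness amounts to openness in `ℝ`). -/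
theorem re_nonzero_open_dense_in_segment
    (F : ℂ → ℂ)
    (hF_hol : DifferentiableOn ℂ F upperHalfDisc)
    (hF_cont : ContinuousOn F (upperHalfDisc ∪ realSegment))
    (C : ℝ) (hC : 0 < C)
    (hcone : ∀ t ∈ realSegment, |(F t).im| ≤ C * |(F t).re|)
    (hF_ne : ¬ (∀ z ∈ upperHalfDisc, F z = 0)) :
    IsOpen {t ∈ Set.Ioo (-1 : ℝ) 1 | (F (t : ℂ)).re ≠ 0} ∧
    Set.Ioo (-1 : ℝ) 1 ⊆ closure {t ∈ Set.Ioo (-1 : ℝ) 1 | (F (t : ℂ)).re ≠ 0} :=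
  re_nonzero_open_dense_in_segment_general F hF_hol hF_cont C hcone hF_ne
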